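/- arXiv:1807.03475 — 2 statements merged into one kernel-verified Lean document; each statement's English description precedes it below -/
import Mathlib

section
/- Let k_e ∈ ℝ, let Ω₀ : [0,∞) → ℝ³ and ΔΩ : [0,∞) → ℝ³ be curves, and let R₀ : [0,∞) → ℝ^{3×3} be differentiable with R₀(t)ᵀR₀(t) = I and Ṙ₀(t) = R₀(t)·Ω̂₀(t) for all t ≥ 0. Suppose ΔR : [0,∞) → ℝ^{3×3} is differentiable and satisfies ΔṘ(t) = ΔR(t)·Ω̂₀(t) + R₀(t)·(ΔΩ(t))^∧ − 2k_e·R₀(t)·Sym(R₀(t)ᵀΔR(t)) for all t ≥ 0. Define Z(t) = R₀(t)ᵀ·ΔR(t), Z_s = Sym(Z), Z_k = Skew(Z). Then for all t ≥ 0: Ż_s(t) = [Z_s(t), Ω̂₀(t)] − 2k_e·Z_s(t), and Ż_k(t) = [Z_k(t), Ω̂₀(t)] + (ΔΩ(t))^∧, the latter being equivalent to d/dt (Z_k^∨)(t) = Z_k^∨(t) × Ω₀(t) + ΔΩ(t). -/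
open Matrix

attribute [local instance] Matrix.frobeniusNormedAddCommGroup Matrix.frobeniusNormedSpace

noncomputable section

abbrev Mat3 := Matrix (Fin 3) (Fin 3) ℝ

/-- Frobenius inner product. -/
def finner (A B : Mat3) : ℝ := (Aᵀ * B).trace

/-- Euclidean norm on ℝ³. -/
def enorm3 (v : Fin 3 → ℝ) : ℝ := Real.sqrt (∑ i, v i ^ 2)

/-- The hat map. -/
def hat (v : Fin 3 → ℝ) : Mat3 :=
  !![0, -v 2, v 1; v 2, 0, -v 0; -v 1, v 0, 0]

/-- The vee map, inverse of the hat map on skew-symmetric matrices. -/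
def vee (A : Mat3) : Fin 3 → ℝ := ![A 2 1, A 0 2, A 1 0]

/-- The cross product on ℝ³. -/
def cross (u v : Fin 3 → ℝ) : Fin 3 → ℝ :=
  ![u 1 * v 2 - u 2 * v 1, u 2 * v 0 - u 0 * v 2, u 0 * v 1 - u 1 * v 0]

/-- Symmetrization operator. -/
def symPart (A : Mat3) : Mat3 := (2⁻¹ : ℝ) • (A + Aᵀ)

/-- Skew-symmetrization operator. -/
def skewPart (A : Mat3) : Mat3 := (2⁻¹ : ℝ) • (A - Aᵀ)

/-- `SO(3)`: rotation matrices. -/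
def SO3 : Set Mat3 := {R | Rᵀ * R = 1 ∧ 0 < R.det}

/-- The matrix commutator. -/
def mcomm (A B : Mat3) : Mat3 := A * B - B * A


/-! Differentiating `Z = R₀ᵀ ΔR` by the product rule and using `R₀ᵀ R₀ = 1`, `Ω̂₀ᵀ = -Ω̂₀` gives
`Ż = [Z, Ω̂₀] + ΔΩ^ - 2 kₑ Sym Z`. Because `Ω̂₀` is skew, transposition commutes with `[·, Ω̂₀]`,
so the linear projections `Sym` and `Skew` commute with both `[·, Ω̂₀]` and `d/dt`; applying them
separates the equation, since `ΔΩ^` is skew and `Sym Z` is symmetric. The equation for `Z_k^∨`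
follows because `hat` is a Lie algebra isomorphism `(ℝ³, ×) ≅ so(3)`. -/

attribute [local instance] Matrix.frobeniusNormedRing Matrix.frobeniusNormedAlgebra

theorem hat_transpose (v : Fin 3 → ℝ) : (hat v)ᵀ = -hat v := by
  ext i j; fin_cases i <;> fin_cases j <;> simp [hat]

theorem vee_hat (v : Fin 3 → ℝ) : vee (hat v) = v := by
  ext i; fin_cases i <;> simp [vee, hat]

theorem hat_vee_of_transpose_eq_neg {A : Mat3} (hA : Aᵀ = -A) : hat (vee A) = A := by
  have h i j : A j i = -A i j := congrFun (congrFun hA i) j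
  ext i j
  fin_cases i <;> fin_cases j <;> simp [hat, vee] <;>
    linarith [h 0 0, h 1 1, h 2 2, h 0 1, h 0 2, h 1 2]

theorem mcomm_hat_hat (u v : Fin 3 → ℝ) : mcomm (hat u) (hat v) = hat (cross u v) := by
  ext i j; fin_cases i <;> fin_cases j <;> simp [mcomm, hat, cross] <;> ring

theorem vee_mcomm_hat_of_transpose_eq_neg {A : Mat3} (hA : Aᵀ = -A) (w : Fin 3 → ℝ) :
    vee (mcomm A (hat w)) = cross (vee A) w := by
  conv_lhs => rw [← hat_vee_of_transpose_eq_neg hA]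
  rw [mcomm_hat_hat, vee_hat]

theorem transpose_mcomm_of_transpose_eq_neg (A : Mat3) {W : Mat3} (hW : Wᵀ = -W) :
    (mcomm A W)ᵀ = mcomm Aᵀ W := by
  simp only [mcomm, transpose_sub, transpose_mul, hW, Matrix.neg_mul, Matrix.mul_neg]
  abel

theorem transpose_symPart (A : Mat3) : (symPart A)ᵀ = symPart A := by
  simp only [symPart, transpose_smul, transpose_add, transpose_transpose, add_comm]

theorem transpose_skewPart (A : Mat3) : (skewPart A)ᵀ = -skewPart A := by
  simp only [skewPart, transpose_smul, transpose_sub, transpose_transpose, ← smul_neg, neg_sub]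

theorem symPart_add (A B : Mat3) : symPart (A + B) = symPart A + symPart B := by
  simp only [symPart, transpose_add]; module

theorem symPart_sub (A B : Mat3) : symPart (A - B) = symPart A - symPart B := by
  simp only [symPart, transpose_sub]; module

theorem symPart_smul (c : ℝ) (A : Mat3) : symPart (c • A) = c • symPart A := by
  simp only [symPart, transpose_smul]; module

theorem skewPart_add (A B : Mat3) : skewPart (A + B) = skewPart A + skewPart B := by
  simp only [skewPart, transpose_add]; module

theorem skewPart_sub (A B : Mat3) : skewPart (A - B) = skewPart A - skewPart B := by
  simp only [skewPart, transpose_sub]; module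

theorem skewPart_smul (c : ℝ) (A : Mat3) : skewPart (c • A) = c • skewPart A := by
  simp only [skewPart, transpose_smul]; module

theorem symPart_of_transpose_eq {A : Mat3} (hA : Aᵀ = A) : symPart A = A := by
  simp only [symPart, hA]; module

theorem skewPart_of_transpose_eq {A : Mat3} (hA : Aᵀ = A) : skewPart A = 0 := by
  simp [skewPart, hA]

theorem symPart_of_transpose_eq_neg {A : Mat3} (hA : Aᵀ = -A) : symPart A = 0 := by
  simp [symPart, hA]

theorem skewPart_of_transpose_eq_neg {A : Mat3} (hA : Aᵀ = -A) : skewPart A = A := by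
  simp only [skewPart, hA, sub_neg_eq_add]; module

theorem symPart_mcomm_of_transpose_eq_neg (A : Mat3) {W : Mat3} (hW : Wᵀ = -W) :
    symPart (mcomm A W) = mcomm (symPart A) W := by
  rw [symPart, symPart, transpose_mcomm_of_transpose_eq_neg A hW]
  simp only [mcomm, Matrix.smul_mul, Matrix.add_mul, Matrix.mul_smul, Matrix.mul_add]
  module

theorem skewPart_mcomm_of_transpose_eq_neg (A : Mat3) {W : Mat3} (hW : Wᵀ = -W) :
    skewPart (mcomm A W) = mcomm (skewPart A) W := by
  rw [skewPart, skewPart, transpose_mcomm_of_transpose_eq_neg A hW]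
  simp only [mcomm, Matrix.smul_mul, Matrix.sub_mul, Matrix.mul_smul, Matrix.mul_sub]
  module

def veeLinearMap : Mat3 →ₗ[ℝ] Fin 3 → ℝ where
  toFun := vee
  map_add' A B := by ext i; fin_cases i <;> rfl
  map_smul' c A := by ext i; fin_cases i <;> rfl

theorem vee_add (A B : Mat3) : vee (A + B) = vee A + vee B :=
  map_add veeLinearMap A B

theorem HasDerivAt.matrix_transpose {m n : Type*} [Fintype m] [Fintype n] {f : ℝ → Matrix m n ℝ}
    {f' : Matrix m n ℝ} {t : ℝ} (hf : HasDerivAt f f' t) :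
    HasDerivAt (fun s => (f s)ᵀ) f'ᵀ t :=
  (transposeLinearEquiv m n ℝ ℝ).toLinearMap.toContinuousLinearMap.hasFDerivAt.comp_hasDerivAt t hf

section Projections

variable {f : ℝ → Mat3} {f' : Mat3} {t : ℝ}

theorem HasDerivAt.symPart (hf : HasDerivAt f f' t) :
    HasDerivAt (fun s => symPart (f s)) (symPart f') t :=
  (hf.add hf.matrix_transpose).const_smul (2⁻¹ : ℝ)

theorem HasDerivAt.skewPart (hf : HasDerivAt f f' t) :
    HasDerivAt (fun s => skewPart (f s)) (skewPart f') t :=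
  (hf.sub hf.matrix_transpose).const_smul (2⁻¹ : ℝ)

theorem HasDerivAt.vee (hf : HasDerivAt f f' t) :
    HasDerivAt (fun s => vee (f s)) (vee f') t :=
  veeLinearMap.toContinuousLinearMap.hasFDerivAt.comp_hasDerivAt t hf

end Projections

theorem HasDerivAt.transpose_mul_of_orthogonal {R D : ℝ → Mat3} {W V : Mat3} {t : ℝ}
    (hW : Wᵀ = -W) (hRorth : (R t)ᵀ * R t = 1) (hR : HasDerivAt R (R t * W) t)
    (hD : HasDerivAt D (D t * W + R t * V) t) :
    HasDerivAt (fun s => (R s)ᵀ * D s) (mcomm ((R t)ᵀ * D t) W + V) t := by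
  refine (hR.matrix_transpose.fun_mul hD).congr_deriv ?_
  simp only [mcomm, transpose_mul, hW, Matrix.mul_add, ← Matrix.mul_assoc, hRorth, Matrix.one_mul,
    Matrix.neg_mul]
  abel

/-- Lemma 3: decoupling of the linearized stabilized rigid body dynamics into
symmetric and skew-symmetric parts.  With `Z = R₀ᵀΔR`, `Z_s = Sym Z`,
`Z_k = Skew Z`, one gets `Ż_s = [Z_s, Ω̂₀] − 2k_e Z_s`,
`Ż_k = [Z_k, Ω̂₀] + ΔΩ̂`, equivalently `(Z_k^∨)' = Z_k^∨ × Ω₀ + ΔΩ`. -/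
theorem linearized_dynamics_decoupling (ke : ℝ)
    (Ω₀ ΔΩ : ℝ → Fin 3 → ℝ) (R₀ ΔR : ℝ → Mat3)
    (hR₀orth : ∀ t, 0 ≤ t → (R₀ t)ᵀ * R₀ t = 1)
    (hR₀ : ∀ t, 0 ≤ t → HasDerivAt R₀ (R₀ t * hat (Ω₀ t)) t)
    (hΔR : ∀ t, 0 ≤ t → HasDerivAt ΔR
      (ΔR t * hat (Ω₀ t) + R₀ t * hat (ΔΩ t)
        - (2 * ke) • (R₀ t * symPart ((R₀ t)ᵀ * ΔR t))) t)
    (Z Zs Zk : ℝ → Mat3)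
    (hZ : ∀ t, Z t = (R₀ t)ᵀ * ΔR t)
    (hZs : ∀ t, Zs t = symPart (Z t))
    (hZk : ∀ t, Zk t = skewPart (Z t)) :
    ∀ t, 0 ≤ t →
      HasDerivAt Zs (mcomm (Zs t) (hat (Ω₀ t)) - (2 * ke) • Zs t) t ∧
      HasDerivAt Zk (mcomm (Zk t) (hat (Ω₀ t)) + hat (ΔΩ t)) t ∧
      HasDerivAt (fun s => vee (Zk s)) (cross (vee (Zk t)) (Ω₀ t) + ΔΩ t) t := by
  intro t ht
  have hW := hat_transpose (Ω₀ t)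
  obtain rfl : Z = _ := funext hZ
  obtain rfl : Zs = _ := funext hZs
  obtain rfl : Zk = _ := funext hZk
  have hZdot : HasDerivAt (fun s => (R₀ s)ᵀ * ΔR s) (mcomm ((R₀ t)ᵀ * ΔR t) (hat (Ω₀ t))
      + (hat (ΔΩ t) - (2 * ke) • symPart ((R₀ t)ᵀ * ΔR t))) t :=
    (hR₀ t ht).transpose_mul_of_orthogonal hW (hR₀orth t ht)
      (by simpa only [Matrix.mul_sub, Matrix.mul_smul, add_sub_assoc] using hΔR t ht)
  have hZkdot : HasDerivAt (fun s => skewPart ((R₀ s)ᵀ * ΔR s))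
      (mcomm (skewPart ((R₀ t)ᵀ * ΔR t)) (hat (Ω₀ t)) + hat (ΔΩ t)) t := by
    simpa only [skewPart_add, skewPart_sub, skewPart_smul, skewPart_mcomm_of_transpose_eq_neg _ hW,
      skewPart_of_transpose_eq_neg (hat_transpose _), skewPart_of_transpose_eq (transpose_symPart _),
      smul_zero, sub_zero] using hZdot.skewPart
  refine ⟨?_, hZkdot, ?_⟩
  · simpa only [symPart_add, symPart_sub, symPart_smul, symPart_mcomm_of_transpose_eq_neg _ hW,
      symPart_of_transpose_eq_neg (hat_transpose _), symPart_of_transpose_eq (transpose_symPart _),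
      zero_sub, ← sub_eq_add_neg] using hZdot.symPart
  · simpa only [vee_add, vee_mcomm_hat_of_transpose_eq_neg (transpose_skewPart _), vee_hat]
      using hZkdot.vee

end
end

section
/- Let k_e > 0, let Ω₀ : [0,∞) → ℝ³ be continuous and bounded, let k_P > 0 be a real number, and let K_D ∈ ℝ^{3×3} be positive definite and symmetric. Then there exist constants C > 0 and λ > 0 such that every solution (Z_s, z, ω) : [0,∞) → Sym(ℝ^{3×3}) × ℝ³ × ℝ³ of the closed-loop system Ż_s = [Z_s, Ω̂₀(t)] − 2k_e Z_s, ż = z × Ω₀(t) + ω, ω̇ = −k_P z − K_D ω, satisfies ‖Z_s(t)‖ + ‖z(t)‖ + ‖ω(t)‖ ≤ C·e^{−λt}·(‖Z_s(0)‖ + ‖z(0)‖ + ‖ω(0)‖) for all t ≥ 0. -/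
open Matrix

attribute [local instance] Matrix.frobeniusNormedAddCommGroup Matrix.frobeniusNormedSpace

noncomputable section

/-- A real square matrix is Hurwitz if every complex eigenvalue (root of its
characteristic polynomial over ℂ) has negative real part. -/
def IsHurwitzMat {n : Type*} [Fintype n] [DecidableEq n] (M : Matrix n n ℝ) : Prop :=
  ∀ μ : ℂ, (M.map (algebraMap ℝ ℂ)).charpoly.eval μ = 0 → μ.re < 0

/-- A real polynomial is Hurwitz if all of its complex roots have negative real part. -/
def IsHurwitzPoly (p : Polynomial ℝ) : Prop :=
  ∀ μ : ℂ, (p.map (algebraMap ℝ ℂ)).eval μ = 0 → μ.re < 0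

/-!
The system decouples. For symmetric `Z`, `tr (Zᵀ (Z B - B Z)) = tr (Z² B) - tr (Z B Z) = 0` for
every `B`, so `d/dt ‖Z_s‖² = -4 k_e ‖Z_s‖²` whatever `Ω₀` is. For `(z, ω)`, the rotation term
`z × Ω₀` is orthogonal to `z`, and `V = k_P |z|² + |ω|² + ε ⟨z, ω⟩` with small `ε > 0` is comparable
to `|z|² + |ω|²` and satisfies `V̇ ≤ -μ V`: the cross term supplies the damping that `z` lacks, and
the coupling terms it creates, of size at most `(sup |Ω₀| + ‖K_D‖) |z| |ω|`, are absorbed by the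
damping of `ω`. Grönwall's argument then gives exponential decay of both parts.
-/

theorem le_mul_exp_of_hasDerivAt_le_neg_mul {V : ℝ → ℝ} {lam : ℝ}
    (hV : ∀ t, 0 ≤ t → ∃ V', HasDerivAt V V' t ∧ V' ≤ -lam * V t) {t : ℝ} (ht : 0 ≤ t) :
    V t ≤ V 0 * Real.exp (-lam * t) := by
  have hW : ∀ s, 0 ≤ s →
      ∃ W', HasDerivAt (fun s ↦ V s * Real.exp (lam * s)) W' s ∧ W' ≤ 0 := by
    intro s hs
    obtain ⟨V', hV', hle⟩ := hV s hs
    refine ⟨(V' + lam * V s) * Real.exp (lam * s),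
      (hV'.fun_mul ((hasDerivAt_id s).const_mul lam).exp).congr_deriv ?_, ?_⟩
    · simp only [id_eq, mul_one]; ring
    · exact mul_nonpos_of_nonpos_of_nonneg (by linarith) (Real.exp_pos _).le
  have hanti : AntitoneOn (fun s ↦ V s * Real.exp (lam * s)) (Set.Ici 0) := by
    refine antitoneOn_of_deriv_nonpos (convex_Ici 0) (fun s hs ↦ ?_) (fun s hs ↦ ?_)
      fun s hs ↦ ?_
    · obtain ⟨W', hW', -⟩ := hW s hs
      exact hW'.continuousAt.continuousWithinAt
    · rw [interior_Ici] at hs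
      obtain ⟨W', hW', -⟩ := hW s hs.le
      exact hW'.differentiableAt.differentiableWithinAt
    · rw [interior_Ici] at hs
      obtain ⟨W', hW', hle⟩ := hW s hs.le
      rwa [hW'.deriv]
  have := hanti (Set.mem_Ici.2 le_rfl) ht ht
  simp only [mul_zero, Real.exp_zero, mul_one] at this
  calc V t = V t * Real.exp (lam * t) * Real.exp (-lam * t) := by
        rw [mul_assoc, ← Real.exp_add]; simp
    _ ≤ V 0 * Real.exp (-lam * t) := by gcongr

theorem add_le_sqrt_two_mul_of_sq_add_sq_le {a b a₀ b₀ c : ℝ} (ha : 0 ≤ a) (hb : 0 ≤ b)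
    (ha₀ : 0 ≤ a₀) (hb₀ : 0 ≤ b₀) (hc : 0 ≤ c)
    (h : a ^ 2 + b ^ 2 ≤ c ^ 2 * (a₀ ^ 2 + b₀ ^ 2)) :
    a + b ≤ √2 * c * (a₀ + b₀) := by
  refine (pow_le_pow_iff_left₀ (by positivity) (by positivity) two_ne_zero).1 ?_
  rw [mul_pow, mul_pow, Real.sq_sqrt zero_le_two]
  nlinarith [sq_nonneg (a - b), mul_nonneg (sq_nonneg c) (mul_nonneg ha₀ hb₀)]

theorem add_le_mul_exp_of_le_mul_exp {x y x₀ y₀ C₁ C₂ μ₁ μ₂ t : ℝ}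
    (hx : x ≤ C₁ * Real.exp (-μ₁ * t) * x₀) (hy : y ≤ C₂ * Real.exp (-μ₂ * t) * y₀)
    (hC₁ : 0 ≤ C₁) (hC₂ : 0 ≤ C₂) (hx₀ : 0 ≤ x₀) (hy₀ : 0 ≤ y₀) (ht : 0 ≤ t) :
    x + y ≤ (C₁ + C₂) * Real.exp (-min μ₁ μ₂ * t) * (x₀ + y₀) := by
  have h₁ : Real.exp (-μ₁ * t) ≤ Real.exp (-min μ₁ μ₂ * t) := by
    gcongr; exact min_le_left _ _
  have h₂ : Real.exp (-μ₂ * t) ≤ Real.exp (-min μ₁ μ₂ * t) := by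
    gcongr; exact min_le_right _ _
  set E := Real.exp (-min μ₁ μ₂ * t)
  have : x + y ≤ C₁ * E * x₀ + C₂ * E * y₀ :=
    add_le_add (hx.trans (by gcongr)) (hy.trans (by gcongr))
  have hE : 0 ≤ E := (Real.exp_pos _).le
  nlinarith [mul_nonneg (mul_nonneg hC₁ hE) hy₀, mul_nonneg (mul_nonneg hC₂ hE) hx₀]

namespace Matrix

variable {m n : Type*} [Fintype m] [Fintype n]

theorem trace_transpose_mul_eq_sum (A B : Matrix m n ℝ) :
    (Aᵀ * B).trace = ∑ i, ∑ j, A i j * B i j := by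
  simp only [trace, diag, mul_apply, transpose_apply]
  exact Finset.sum_comm

theorem frobenius_norm_sq_eq_trace (A : Matrix m n ℝ) : ‖A‖ ^ 2 = (Aᵀ * A).trace := by
  rw [frobenius_norm_def, ← Real.sqrt_eq_rpow, Real.sq_sqrt (by positivity),
    trace_transpose_mul_eq_sum]
  simp [sq]

theorem hasDerivAt_frobenius_norm_sq {Z : ℝ → Matrix m n ℝ} {Z' : Matrix m n ℝ} {t : ℝ}
    (hZ : HasDerivAt Z Z' t) :
    HasDerivAt (fun s ↦ ‖Z s‖ ^ 2) (2 * ((Z t)ᵀ * Z').trace) t := by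
  have hentry (i : m) (j : n) : HasDerivAt (fun s ↦ Z s i j) (Z' i j) t :=
    (entryLinearMap ℝ ℝ i j).toContinuousLinearMap.hasFDerivAt.comp_hasDerivAt t hZ
  simp_rw [frobenius_norm_sq_eq_trace, trace_transpose_mul_eq_sum, Finset.mul_sum]
  refine HasDerivAt.fun_sum fun i _ ↦ HasDerivAt.fun_sum fun j _ ↦ ?_
  exact ((hentry i j).fun_mul (hentry i j)).congr_deriv (by ring)

theorem trace_transpose_mul_commutator_eq_zero {Z : Matrix n n ℝ} (hZ : Zᵀ = Z)
    (B : Matrix n n ℝ) : (Zᵀ * (Z * B - B * Z)).trace = 0 := by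
  rw [hZ, Matrix.mul_sub, trace_sub, ← Matrix.mul_assoc, trace_mul_cycle',
    Matrix.mul_assoc, sub_self]

open scoped MatrixOrder in
theorem PosDef.exists_pos_mul_dotProduct_self_le {K : Matrix n n ℝ} (hK : K.PosDef) :
    ∃ m > 0, ∀ x : n → ℝ, m * (x ⬝ᵥ x) ≤ x ⬝ᵥ (K *ᵥ x) := by
  classical
  cases isEmpty_or_nonempty n
  · exact ⟨1, one_pos, fun x ↦ by simp [dotProduct]⟩
  obtain ⟨m, hm, hle⟩ := (CFC.exists_pos_algebraMap_le_iff hK.isHermitian).2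
    fun _ hx ↦ hK.isStrictlyPositive.spectrum_pos hx
  refine ⟨m, hm, fun x ↦ ?_⟩
  have := (le_iff.1 hle).dotProduct_mulVec_nonneg x
  simp only [star_trivial, Algebra.algebraMap_eq_smul_one, sub_mulVec, smul_mulVec,
    one_mulVec, dotProduct_sub, dotProduct_smul, smul_eq_mul, sub_nonneg] at this
  exact this

end Matrix

theorem norm_le_exp_mul_norm_of_hasDerivAt_mcomm {Zs B : ℝ → Mat3} {ke : ℝ}
    (hsym : ∀ t, 0 ≤ t → (Zs t)ᵀ = Zs t)
    (hZ : ∀ t, 0 ≤ t → HasDerivAt Zs (mcomm (Zs t) (B t) - (2 * ke) • Zs t) t)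
    {t : ℝ} (ht : 0 ≤ t) : ‖Zs t‖ ≤ Real.exp (-(2 * ke) * t) * ‖Zs 0‖ := by
  have hsq : ‖Zs t‖ ^ 2 ≤ ‖Zs 0‖ ^ 2 * Real.exp (-(4 * ke) * t) := by
    refine le_mul_exp_of_hasDerivAt_le_neg_mul (V := fun s ↦ ‖Zs s‖ ^ 2) (lam := 4 * ke)
      (fun s hs ↦ ⟨_, (Matrix.hasDerivAt_frobenius_norm_sq (hZ s hs)).congr_deriv ?_, le_rfl⟩)
      ht
    rw [mcomm, Matrix.mul_sub, Matrix.trace_sub,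
      Matrix.trace_transpose_mul_commutator_eq_zero (hsym s hs), Matrix.mul_smul,
      Matrix.trace_smul, ← Matrix.frobenius_norm_sq_eq_trace, smul_eq_mul]
    ring
  have hexp : Real.exp (-(4 * ke) * t) = Real.exp (-(2 * ke) * t) ^ 2 := by
    rw [← Real.exp_nat_mul]; ring_nf
  rw [hexp, ← mul_pow, mul_comm] at hsq
  exact (pow_le_pow_iff_left₀ (norm_nonneg _) (by positivity) two_ne_zero).1 hsq

theorem HasDerivAt.dotProduct {ι : Type*} [Fintype ι] {u v : ℝ → ι → ℝ} {u' v' : ι → ℝ}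
    {t : ℝ} (hu : HasDerivAt u u' t) (hv : HasDerivAt v v' t) :
    HasDerivAt (fun s ↦ u s ⬝ᵥ v s) (u' ⬝ᵥ v t + u t ⬝ᵥ v') t := by
  show HasDerivAt (fun s ↦ ∑ i, u s i * v s i) (∑ i, u' i * v t i + ∑ i, u t i * v' i) t
  rw [← Finset.sum_add_distrib]
  exact HasDerivAt.fun_sum fun i _ ↦ (hasDerivAt_pi.1 hu i).fun_mul (hasDerivAt_pi.1 hv i)

theorem cross_eq_crossProduct (u v : Fin 3 → ℝ) : cross u v = u ⨯₃ v := rfl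

theorem enorm3_nonneg (v : Fin 3 → ℝ) : 0 ≤ enorm3 v := Real.sqrt_nonneg _

theorem enorm3_neg (v : Fin 3 → ℝ) : enorm3 (-v) = enorm3 v := by
  simp [enorm3]

theorem enorm3_sq (v : Fin 3 → ℝ) : enorm3 v ^ 2 = v ⬝ᵥ v := by
  rw [enorm3, Real.sq_sqrt (by positivity)]
  simp [dotProduct, sq]

theorem enorm3_eq_norm_toLp (v : Fin 3 → ℝ) :
    enorm3 v = ‖(WithLp.toLp 2 v : EuclideanSpace ℝ (Fin 3))‖ := by
  simp [enorm3, EuclideanSpace.norm_eq]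

theorem dotProduct_le_enorm3_mul (u v : Fin 3 → ℝ) : u ⬝ᵥ v ≤ enorm3 u * enorm3 v :=
  Real.sum_mul_le_sqrt_mul_sqrt _ u v

theorem enorm3_cross_le (u v : Fin 3 → ℝ) : enorm3 (cross u v) ≤ enorm3 u * enorm3 v := by
  refine (pow_le_pow_iff_left₀ (enorm3_nonneg _)
    (mul_nonneg (enorm3_nonneg u) (enorm3_nonneg v)) two_ne_zero).1 ?_
  rw [mul_pow, enorm3_sq, enorm3_sq, enorm3_sq, cross_eq_crossProduct, cross_dot_cross,
    dotProduct_comm v u]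
  nlinarith [sq_nonneg (u ⬝ᵥ v)]

theorem enorm3_mulVec_le (K : Mat3) (x : Fin 3 → ℝ) :
    enorm3 (K *ᵥ x) ≤ ‖Matrix.toEuclideanCLM (𝕜 := ℝ) K‖ * enorm3 x := by
  simpa only [enorm3_eq_norm_toLp, Matrix.toEuclideanCLM_toLp] using
    (Matrix.toEuclideanCLM (𝕜 := ℝ) K).le_opNorm (WithLp.toLp 2 x)

def pdLyapunov (kP ε : ℝ) (z ω : Fin 3 → ℝ) : ℝ := kP * (z ⬝ᵥ z) + ω ⬝ᵥ ω + ε * (z ⬝ᵥ ω)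

section pdLyapunov

variable {kP ε : ℝ}

theorem pdLyapunov_le (hkP : 0 ≤ kP) (hε0 : 0 ≤ ε) (hε1 : ε ≤ 1) (z ω : Fin 3 → ℝ) :
    pdLyapunov kP ε z ω ≤ (kP + 3 / 2) * (enorm3 z ^ 2 + enorm3 ω ^ 2) := by
  have := dotProduct_le_enorm3_mul z ω
  rw [pdLyapunov, ← enorm3_sq, ← enorm3_sq]
  nlinarith [sq_nonneg (enorm3 z - enorm3 ω), mul_nonneg (enorm3_nonneg z) (enorm3_nonneg ω)]

theorem le_pdLyapunov (hε0 : 0 ≤ ε) (hεkP : ε ≤ kP) (hε1 : ε ≤ 1) (z ω : Fin 3 → ℝ) :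
    ε / 2 * (enorm3 z ^ 2 + enorm3 ω ^ 2) ≤ pdLyapunov kP ε z ω := by
  have := dotProduct_le_enorm3_mul (-z) ω
  rw [neg_dotProduct, enorm3_neg] at this
  rw [pdLyapunov, ← enorm3_sq, ← enorm3_sq]
  nlinarith [sq_nonneg (enorm3 z - enorm3 ω)]

theorem hasDerivAt_pdLyapunov {z ω : ℝ → Fin 3 → ℝ} {z' ω' : Fin 3 → ℝ} {t : ℝ}
    (hz : HasDerivAt z z' t) (hω : HasDerivAt ω ω' t) :
    HasDerivAt (fun s ↦ pdLyapunov kP ε (z s) (ω s))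
      (2 * kP * (z t ⬝ᵥ z') + 2 * (ω t ⬝ᵥ ω') + ε * (z' ⬝ᵥ ω t + z t ⬝ᵥ ω')) t := by
  refine ((((hz.dotProduct hz).const_mul kP).add (hω.dotProduct hω)).add
    ((hz.dotProduct hω).const_mul ε)).congr_deriv ?_
  rw [dotProduct_comm z' (z t), dotProduct_comm ω' (ω t)]
  ring

theorem pdLyapunov_deriv_le {m L M : ℝ} {K : Mat3} (hkP : 0 < kP)
    (hm : ∀ x, m * (x ⬝ᵥ x) ≤ x ⬝ᵥ (K *ᵥ x)) (hL : ∀ x, enorm3 (K *ᵥ x) ≤ L * enorm3 x)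
    (hε0 : 0 ≤ ε) (hε : ε * (1 + (M + L) ^ 2 / (2 * kP)) ≤ m) {z ω Ω : Fin 3 → ℝ}
    (hΩ : enorm3 Ω ≤ M) :
    2 * kP * (z ⬝ᵥ (cross z Ω + ω)) + 2 * (ω ⬝ᵥ ((-kP) • z - K *ᵥ ω)) +
        ε * ((cross z Ω + ω) ⬝ᵥ ω + z ⬝ᵥ ((-kP) • z - K *ᵥ ω)) ≤
      -(ε * kP / 2 * enorm3 z ^ 2 + m * enorm3 ω ^ 2) := by
  set a := enorm3 z
  set b := enorm3 ω
  have ha : 0 ≤ a := enorm3_nonneg z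
  have hb : 0 ≤ b := enorm3_nonneg ω
  have hcoupling : cross z Ω ⬝ᵥ ω - z ⬝ᵥ K *ᵥ ω ≤ (M + L) * a * b := by
    have hrot := (dotProduct_le_enorm3_mul (cross z Ω) ω).trans
      (mul_le_mul_of_nonneg_right ((enorm3_cross_le z Ω).trans
        (mul_le_mul_of_nonneg_left hΩ ha)) hb)
    have hfeedback := (dotProduct_le_enorm3_mul (-z) (K *ᵥ ω)).trans
      (mul_le_mul_of_nonneg_left (hL ω) (enorm3_nonneg _))
    rw [neg_dotProduct, enorm3_neg] at hfeedback
    linarith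
  have hamgm : (M + L) * a * b ≤ kP / 2 * a ^ 2 + (M + L) ^ 2 / (2 * kP) * b ^ 2 := by
    have := sq_nonneg (kP * a - (M + L) * b)
    field_simp
    nlinarith
  have hdamp : m * b ^ 2 ≤ ω ⬝ᵥ K *ᵥ ω := enorm3_sq ω ▸ hm ω
  have hexpand : 2 * kP * (z ⬝ᵥ (cross z Ω + ω)) + 2 * (ω ⬝ᵥ ((-kP) • z - K *ᵥ ω)) +
      ε * ((cross z Ω + ω) ⬝ᵥ ω + z ⬝ᵥ ((-kP) • z - K *ᵥ ω)) =
      -2 * (ω ⬝ᵥ K *ᵥ ω) + ε * (cross z Ω ⬝ᵥ ω - z ⬝ᵥ K *ᵥ ω + b ^ 2 - kP * a ^ 2) := by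
    simp only [a, b, enorm3_sq, dotProduct_add, add_dotProduct, dotProduct_sub,
      dotProduct_smul, cross_eq_crossProduct, dot_self_cross, smul_eq_mul]
    rw [dotProduct_comm ω z]
    ring
  rw [hexpand]
  nlinarith [mul_le_mul_of_nonneg_left (hcoupling.trans hamgm) hε0]

end pdLyapunov

theorem exists_pd_energy_decay {kP : ℝ} (hkP : 0 < kP) {K : Mat3} (hK : K.PosDef)
    {Ω₀ : ℝ → Fin 3 → ℝ} {M : ℝ} (hM : ∀ t, 0 ≤ t → enorm3 (Ω₀ t) ≤ M) :
    ∃ C > (0 : ℝ), ∃ μ > (0 : ℝ), ∀ z ω : ℝ → Fin 3 → ℝ,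
      (∀ t, 0 ≤ t → HasDerivAt z (cross (z t) (Ω₀ t) + ω t) t) →
      (∀ t, 0 ≤ t → HasDerivAt ω ((-kP) • z t - K *ᵥ ω t) t) →
      ∀ t, 0 ≤ t → enorm3 (z t) ^ 2 + enorm3 (ω t) ^ 2 ≤
        C * Real.exp (-μ * t) * (enorm3 (z 0) ^ 2 + enorm3 (ω 0) ^ 2) := by
  obtain ⟨m, hm, hmK⟩ := hK.exists_pos_mul_dotProduct_self_le
  set L := ‖Matrix.toEuclideanCLM (𝕜 := ℝ) K‖
  set ε := min (min kP 1) (m / (1 + (M + L) ^ 2 / (2 * kP)))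
  have hε0 : 0 < ε := by positivity
  have hεkP : ε ≤ kP := (min_le_left _ _).trans (min_le_left _ _)
  have hε1 : ε ≤ 1 := (min_le_left _ _).trans (min_le_right _ _)
  have hεm : ε * (1 + (M + L) ^ 2 / (2 * kP)) ≤ m :=
    (le_div_iff₀ (by positivity)).1 (min_le_right _ _)
  set μ := min (ε * kP / 2) m / (kP + 3 / 2)
  have hμ0 : 0 < μ := by positivity
  have hμ : μ * (kP + 3 / 2) = min (ε * kP / 2) m := div_mul_cancel₀ _ (by positivity)
  refine ⟨(kP + 3 / 2) / (ε / 2), by positivity, μ, hμ0, fun z ω hz hω t ht ↦ ?_⟩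
  have hV : ∀ s, 0 ≤ s → ∃ V', HasDerivAt (fun s ↦ pdLyapunov kP ε (z s) (ω s)) V' s ∧
      V' ≤ -μ * pdLyapunov kP ε (z s) (ω s) := fun s hs ↦
    ⟨_, hasDerivAt_pdLyapunov (hz s hs) (hω s hs),
      (pdLyapunov_deriv_le hkP hmK (enorm3_mulVec_le K) hε0.le hεm (hM s hs)).trans <| by
        have hVle := mul_le_mul_of_nonneg_left (pdLyapunov_le hkP.le hε0.le hε1 (z s) (ω s))
          hμ0.le
        have ha := mul_le_mul_of_nonneg_right (min_le_left (ε * kP / 2) m)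
          (sq_nonneg (enorm3 (z s)))
        have hb := mul_le_mul_of_nonneg_right (min_le_right (ε * kP / 2) m)
          (sq_nonneg (enorm3 (ω s)))
        nlinarith⟩
  have hdecay := le_mul_exp_of_hasDerivAt_le_neg_mul hV ht
  calc enorm3 (z t) ^ 2 + enorm3 (ω t) ^ 2
      = ε / 2 * (enorm3 (z t) ^ 2 + enorm3 (ω t) ^ 2) / (ε / 2) := by field_simp
    _ ≤ pdLyapunov kP ε (z 0) (ω 0) * Real.exp (-μ * t) / (ε / 2) :=
      div_le_div_of_nonneg_right ((le_pdLyapunov hε0.le hεkP hε1 _ _).trans hdecay)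
        (by positivity)
    _ ≤ (kP + 3 / 2) * (enorm3 (z 0) ^ 2 + enorm3 (ω 0) ^ 2) * Real.exp (-μ * t) / (ε / 2) :=
      div_le_div_of_nonneg_right (mul_le_mul_of_nonneg_right
        (pdLyapunov_le hkP.le hε0.le hε1 _ _) (Real.exp_pos _).le) (by positivity)
    _ = _ := by ring

theorem exists_pd_exp_decay {kP : ℝ} (hkP : 0 < kP) {K : Mat3} (hK : K.PosDef)
    {Ω₀ : ℝ → Fin 3 → ℝ} {M : ℝ} (hM : ∀ t, 0 ≤ t → enorm3 (Ω₀ t) ≤ M) :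
    ∃ C > (0 : ℝ), ∃ μ > (0 : ℝ), ∀ z ω : ℝ → Fin 3 → ℝ,
      (∀ t, 0 ≤ t → HasDerivAt z (cross (z t) (Ω₀ t) + ω t) t) →
      (∀ t, 0 ≤ t → HasDerivAt ω ((-kP) • z t - K *ᵥ ω t) t) →
      ∀ t, 0 ≤ t → enorm3 (z t) + enorm3 (ω t) ≤
        C * Real.exp (-μ * t) * (enorm3 (z 0) + enorm3 (ω 0)) := by
  obtain ⟨C, hC, μ, hμ, hdecay⟩ := exists_pd_energy_decay hkP hK hM
  refine ⟨√2 * √C, by positivity, μ / 2, by positivity, fun z ω hz hω t ht ↦ ?_⟩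
  have hsq : (√C * Real.exp (-(μ / 2) * t)) ^ 2 = C * Real.exp (-μ * t) := by
    rw [mul_pow, Real.sq_sqrt hC.le, ← Real.exp_nat_mul]; ring_nf
  have := add_le_sqrt_two_mul_of_sq_add_sq_le (enorm3_nonneg _) (enorm3_nonneg _)
    (enorm3_nonneg _) (enorm3_nonneg _) (by positivity) (hsq ▸ hdecay z ω hz hω t ht)
  linarith

theorem prop3_PD_exp_stabilization_general (ke : ℝ) (hke : 0 < ke)
    (Ω₀ : ℝ → Fin 3 → ℝ)
    (hΩ₀bdd : ∃ M, ∀ t, 0 ≤ t → enorm3 (Ω₀ t) ≤ M)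
    (kP : ℝ) (hkP : 0 < kP) (KD : Mat3) (hKD : KD.PosDef) :
    ∃ C > (0:ℝ), ∃ lam > (0:ℝ),
      ∀ (Zs : ℝ → Mat3) (z ω : ℝ → Fin 3 → ℝ),
        (∀ t, 0 ≤ t → (Zs t)ᵀ = Zs t) →
        (∀ t, 0 ≤ t →
          HasDerivAt Zs (mcomm (Zs t) (hat (Ω₀ t)) - (2 * ke) • Zs t) t) →
        (∀ t, 0 ≤ t → HasDerivAt z (cross (z t) (Ω₀ t) + ω t) t) →
        (∀ t, 0 ≤ t → HasDerivAt ω ((-kP) • z t - KD.mulVec (ω t)) t) →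
        ∀ t, 0 ≤ t →
          ‖Zs t‖ + enorm3 (z t) + enorm3 (ω t) ≤
            C * Real.exp (-lam * t) * (‖Zs 0‖ + enorm3 (z 0) + enorm3 (ω 0)) := by
  obtain ⟨M, hM⟩ := hΩ₀bdd
  obtain ⟨C, hC, μ, hμ, hdecay⟩ := exists_pd_exp_decay hkP hKD hM
  refine ⟨1 + C, by positivity, min (2 * ke) μ, by positivity,
    fun Zs z ω hsym hZ hz hω t ht ↦ ?_⟩
  have hZs : ‖Zs t‖ ≤ 1 * Real.exp (-(2 * ke) * t) * ‖Zs 0‖ := by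
    rw [one_mul]; exact norm_le_exp_mul_norm_of_hasDerivAt_mcomm hsym hZ ht
  simpa only [add_assoc] using add_le_mul_exp_of_le_mul_exp hZs (hdecay z ω hz hω t ht)
    zero_le_one hC.le (norm_nonneg _) (add_nonneg (enorm3_nonneg _) (enorm3_nonneg _)) ht

/-- Proposition 3: the feedback `Δu = −k_P z − K_D ΔΩ` (independent of the
reference control) exponentially stabilizes the origin of the linearized rigid
body tracking error dynamics. -/
theorem prop3_PD_exp_stabilization (ke : ℝ) (hke : 0 < ke)
    (Ω₀ : ℝ → Fin 3 → ℝ)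
    (hΩ₀cont : ContinuousOn Ω₀ (Set.Ici 0))
    (hΩ₀bdd : ∃ M, ∀ t, 0 ≤ t → enorm3 (Ω₀ t) ≤ M)
    (kP : ℝ) (hkP : 0 < kP) (KD : Mat3) (hKD : KD.PosDef) :
    ∃ C > (0:ℝ), ∃ lam > (0:ℝ),
      ∀ (Zs : ℝ → Mat3) (z ω : ℝ → Fin 3 → ℝ),
        (∀ t, 0 ≤ t → (Zs t)ᵀ = Zs t) →
        (∀ t, 0 ≤ t →
          HasDerivAt Zs (mcomm (Zs t) (hat (Ω₀ t)) - (2 * ke) • Zs t) t) →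
        (∀ t, 0 ≤ t → HasDerivAt z (cross (z t) (Ω₀ t) + ω t) t) →
        (∀ t, 0 ≤ t → HasDerivAt ω ((-kP) • z t - KD.mulVec (ω t)) t) →
        ∀ t, 0 ≤ t →
          ‖Zs t‖ + enorm3 (z t) + enorm3 (ω t) ≤
            C * Real.exp (-lam * t) * (‖Zs 0‖ + enorm3 (z 0) + enorm3 (ω 0)) :=
  prop3_PD_exp_stabilization_general ke hke Ω₀ hΩ₀bdd kP hkP KD hKD

end
end
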